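/- Sample complexity lower bound for ε-DP k-ary distribution estimation under ℓ₂ distance, small-error regime: There exists a universal constant c > 0 such that for every integer k ≥ 40, every α with 0 < α < min(1/√k, 1/48), every ε > 0, and every n: if there exists an ε-differentially private Markov kernel θ̂ from ([k])^n to Δ_k such that for every p ∈ Δ_k, E_{X∼p^{⊗n}} E_{Q∼θ̂(X)}[‖Q − p‖₂] ≤ α, then n ≥ c·(1/α² + √k/(αε)). -/

import Mathlib

open MeasureTheory ProbabilityTheory ENNReal

/-- Hamming distance between two datasets in `𝒳^n`. -/
noncomputable def ham {𝒳 : Type*} {n : ℕ} (x y : Fin n → 𝒳) : ℕ :=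
  letI : DecidableEq 𝒳 := Classical.decEq 𝒳
  (Finset.univ.filter fun i => x i ≠ y i).card

/-- `(ε, δ)`-differential privacy for a kernel from `𝒳^n` to `Θ`. -/
def IsDP {𝒳 Θ : Type*} [MeasurableSpace 𝒳] [MeasurableSpace Θ] {n : ℕ}
    (M : Kernel (Fin n → 𝒳) Θ) (ε δ : ℝ) : Prop :=
  ∀ x y : Fin n → 𝒳, ham x y ≤ 1 → ∀ S : Set Θ, MeasurableSet S →
    M x S ≤ ENNReal.ofReal (Real.exp ε) * M y S + ENNReal.ofReal δ

/-- The simplex `Δ_k` of probability vectors on `[k]`. -/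
def simplex (k : ℕ) : Type := {p : Fin k → ℝ // p ∈ stdSimplex ℝ (Fin k)}

noncomputable instance (k : ℕ) : MeasurableSpace (simplex k) :=
  Subtype.instMeasurableSpace

/-- The probability measure on `Fin k` associated to a probability vector. -/
noncomputable def discMeasure {k : ℕ} (p : Fin k → ℝ) : Measure (Fin k) :=
  ∑ i, ENNReal.ofReal (p i) • Measure.dirac i

/-- `n` i.i.d. samples from the distribution with probability vector `p`. -/
noncomputable def iidSamples {k : ℕ} (n : ℕ) (p : Fin k → ℝ) : Measure (Fin n → Fin k) :=
  Measure.pi fun _ : Fin n => discMeasure p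

/-- Total variation distance between `k`-ary probability vectors:
`(1/2) Σ_x |p(x) − q(x)|`. -/
noncomputable def tvVec {k : ℕ} (p q : Fin k → ℝ) : ℝ := (∑ x, |p x - q x|) / 2

/-- `ℓ₂` distance between `k`-ary probability vectors. -/
noncomputable def l2Vec {k : ℕ} (p q : Fin k → ℝ) : ℝ := Real.sqrt (∑ x, (p x - q x) ^ 2)

/-!
The bound is the sum of a statistical and a privacy lower bound, both obtained from the
distributions that are uniform on `2K` atoms grouped in pairs, with mass `β` moved inside each
pair towards the atom selected by a sign `z j`.

For `K = 1` this is Le Cam's two-point method: with `β² ≍ 1/n` the two distributions are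
`ℓ₂`-separated by `≍ 1/√n`, yet the Bhattacharyya coefficient of their `n`-fold products stays
above `1/2`, so their overlap `∑ min` is at least `1/4` and no estimator has error `≪ 1/√n`.

For `K ≍ k` and `β = 8α/√K` it is Assouad's method: error `α` forces the estimator to recover
most signs, whereas flipping one sign moves the data distribution by `2β` in total variation,
and an `ε`-DP mechanism has output probabilities with bounded differences `ε`, so (coordinate by
coordinate) its output law moves by at most `2nεβ`. Hence `nεβ ≳ 1`, i.e. `n ≳ √k/(αε)`.
-/

open Finset

section Privacy

variable {𝒳 Θ : Type*} {n : ℕ}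

lemma ham_update_le_one (x : Fin n → 𝒳) (i : Fin n) (a : 𝒳) :
    ham (Function.update x i a) x ≤ 1 := by
  refine card_le_one.2 fun j hj j' hj' => ?_
  simp only [mem_filter, mem_univ, true_and] at hj hj'
  rw [Function.update_apply] at hj hj'
  split_ifs at hj hj' with h h' <;> simp_all

lemma IsDP.measureReal_update_le [MeasurableSpace 𝒳] [MeasurableSpace Θ]
    {M : Kernel (Fin n → 𝒳) Θ} [IsMarkovKernel M] {ε : ℝ} (hε : 0 ≤ ε) (hM : IsDP M ε 0)
    {S : Set Θ} (hS : MeasurableSet S) (x : Fin n → 𝒳) (i : Fin n) (a : 𝒳) :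
    (M (Function.update x i a)).real S ≤ (M x).real S + ε := by
  set y := Function.update x i a
  have hyx : (M y).real S ≤ Real.exp ε * (M x).real S := by
    have h := hM y x (ham_update_le_one x i a) S hS
    rw [ENNReal.ofReal_zero, add_zero] at h
    simpa [measureReal_def, ENNReal.toReal_mul, (Real.exp_pos ε).le] using
      ENNReal.toReal_mono (by finiteness) h
  -- `P(y) - P(x) ≤ (1 - exp (-ε)) P(y) ≤ ε`
  have hexp : Real.exp (-ε) * Real.exp ε = 1 := by
    rw [← Real.exp_add, neg_add_cancel, Real.exp_zero]
  nlinarith [Real.add_one_le_exp (-ε), Real.exp_pos (-ε), measureReal_nonneg (μ := M y) (s := S),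
    measureReal_le_one (μ := M y) (s := S)]

end Privacy

section IidWeight

variable {α : Type*} {n : ℕ}

def iidWeight (p : α → ℝ) (x : Fin n → α) : ℝ := ∏ i, p (x i)

lemma iidWeight_nonneg {p : α → ℝ} (hp : ∀ a, 0 ≤ p a) (x : Fin n → α) : 0 ≤ iidWeight p x :=
  prod_nonneg fun i _ => hp (x i)

lemma sum_iidWeight [Fintype α] (p : α → ℝ) : ∑ x : Fin n → α, iidWeight p x = (∑ a, p a) ^ n := by
  classical
  simp only [iidWeight]
  rw [← Fintype.piFinset_univ, ← prod_univ_sum, prod_const, card_univ, Fintype.card_fin]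

lemma sum_iidWeight_mul_succ [Fintype α] (p : α → ℝ) (f : (Fin (n + 1) → α) → ℝ) :
    ∑ x, iidWeight p x * f x = ∑ a, p a * ∑ x : Fin n → α, iidWeight p x * f (Fin.cons a x) := by
  rw [← (Fin.consEquiv fun _ => α).sum_comp, Fintype.sum_prod_type]
  simp [iidWeight, Fin.prod_univ_succ, mul_sum, mul_assoc, Fin.consEquiv]

lemma sqrt_iidWeight_mul {p q : α → ℝ} (hp : ∀ a, 0 ≤ p a) (hq : ∀ a, 0 ≤ q a) (x : Fin n → α) :
    √(iidWeight p x * iidWeight q x) = iidWeight (fun a => √(p a * q a)) x := by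
  simp only [iidWeight]
  rw [← prod_mul_distrib, Real.sqrt_prod _ fun i _ => mul_nonneg (hp (x i)) (hq (x i))]

end IidWeight

section Transfer

variable {k : ℕ}

lemma sum_mul_le_sum_mul_add_tvVec {p q : Fin k → ℝ} (hpq : ∑ a, p a = ∑ a, q a) {h : Fin k → ℝ}
    {ε : ℝ} (hh : ∀ a b, h b ≤ h a + ε) : ∑ a, q a * h a ≤ ∑ a, p a * h a + ε * tvVec p q := by
  rcases isEmpty_or_nonempty (Fin k) with hk | hk
  · simp [tvVec]
  obtain ⟨a₀, -, ha₀⟩ := exists_min_image univ h univ_nonempty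
  have key : ∀ a, (q a - p a) * (h a - h a₀) ≤ ε * (|p a - q a| + (q a - p a)) / 2 := by
    intro a
    have hlow := ha₀ a (mem_univ a)
    have hhigh := hh a₀ a
    rcases le_total (p a) (q a) with hle | hle
    · rw [abs_of_nonpos (by linarith)]; nlinarith
    · rw [abs_of_nonneg (by linarith)]; nlinarith
  have hdiff : ∑ a, q a * h a - ∑ a, p a * h a = ∑ a, (q a - p a) * (h a - h a₀) := by
    simp only [mul_sub, sub_mul, sum_sub_distrib, ← sum_mul, hpq]
    ring
  have htv : ∑ a, ε * (|p a - q a| + (q a - p a)) / 2 = ε * tvVec p q := by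
    simp only [mul_add, add_div, sum_add_distrib, mul_sub, sum_sub_distrib, ← mul_sum, ← sum_div,
      hpq, tvVec]
    ring
  linarith [sum_le_sum fun a (_ : a ∈ univ) => key a]

theorem sum_iidWeight_mul_le_of_update_le {p q : Fin k → ℝ} (hp : p ∈ stdSimplex ℝ (Fin k))
    (hq : q ∈ stdSimplex ℝ (Fin k)) {ε : ℝ} {n : ℕ} (f : (Fin n → Fin k) → ℝ)
    (hf : ∀ x i a, f (Function.update x i a) ≤ f x + ε) :
    ∑ x, iidWeight q x * f x ≤ ∑ x, iidWeight p x * f x + n * ε * tvVec p q := by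
  induction n with
  | zero => simp [iidWeight]
  | succ n ih =>
    rw [sum_iidWeight_mul_succ, sum_iidWeight_mul_succ]
    set H : Fin k → ℝ := fun a => ∑ x : Fin n → Fin k, iidWeight p x * f (Fin.cons a x)
    have hH : ∀ a b, H b ≤ H a + ε := fun a b => by
      calc H b ≤ ∑ x : Fin n → Fin k, iidWeight p x * (f (Fin.cons a x) + ε) := by
            refine sum_le_sum fun x _ => mul_le_mul_of_nonneg_left ?_ (iidWeight_nonneg hp.1 x)
            simpa only [Fin.update_cons_zero] using hf (Fin.cons a x) 0 b
        _ = H a + ε := by simp [H, mul_add, sum_add_distrib, ← sum_mul, sum_iidWeight, hp.2]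
    have hcons : ∀ a,
        ∑ x : Fin n → Fin k, iidWeight q x * f (Fin.cons a x) ≤ H a + n * ε * tvVec p q :=
      fun a => ih _ fun x i b => by simpa only [Fin.cons_update] using hf (Fin.cons a x) i.succ b
    calc ∑ a, q a * ∑ x : Fin n → Fin k, iidWeight q x * f (Fin.cons a x)
        ≤ ∑ a, q a * (H a + n * ε * tvVec p q) :=
          sum_le_sum fun a _ => mul_le_mul_of_nonneg_left (hcons a) (hq.1 a)
      _ = ∑ a, q a * H a + n * ε * tvVec p q := by simp [mul_add, sum_add_distrib, ← sum_mul, hq.2]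
      _ ≤ ∑ a, p a * H a + ε * tvVec p q + n * ε * tvVec p q := by
          gcongr; exact sum_mul_le_sum_mul_add_tvVec (by rw [hp.2, hq.2]) hH
      _ = ∑ a, p a * H a + ↑(n + 1) * ε * tvVec p q := by push_cast; ring

end Transfer

section IidSamples

variable {k n : ℕ}

instance (p : Fin k → ℝ) : IsFiniteMeasure (discMeasure p) := ⟨by simp [discMeasure]⟩

lemma discMeasure_singleton (p : Fin k → ℝ) (a : Fin k) :
    discMeasure p {a} = ENNReal.ofReal (p a) := by
  simp [discMeasure, Pi.single_apply]

lemma iidSamples_singleton {p : Fin k → ℝ} (hp : ∀ a, 0 ≤ p a) (x : Fin n → Fin k) :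
    iidSamples n p {x} = ENNReal.ofReal (iidWeight p x) := by
  rw [iidSamples, Measure.pi_singleton, iidWeight,
    ENNReal.ofReal_prod_of_nonneg fun i _ => hp (x i)]
  simp [discMeasure_singleton]

lemma lintegral_iidSamples {p : Fin k → ℝ} (hp : ∀ a, 0 ≤ p a) (f : (Fin n → Fin k) → ℝ≥0∞) :
    ∫⁻ x, f x ∂iidSamples n p = ∑ x, ENNReal.ofReal (iidWeight p x) * f x := by
  simp [lintegral_fintype, iidSamples_singleton hp, mul_comm]

end IidSamples

section OutputProb

variable {k n : ℕ} {Θ : Type*} [MeasurableSpace Θ]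

noncomputable def outputProb (M : Kernel (Fin n → Fin k) Θ) (p : Fin k → ℝ) (S : Set Θ) : ℝ :=
  ∑ x, iidWeight p x * (M x).real S

lemma outputProb_nonneg (M : Kernel (Fin n → Fin k) Θ) {p : Fin k → ℝ} (hp : ∀ a, 0 ≤ p a)
    (S : Set Θ) : 0 ≤ outputProb M p S :=
  sum_nonneg fun x _ => mul_nonneg (iidWeight_nonneg hp x) measureReal_nonneg

lemma ofReal_outputProb (M : Kernel (Fin n → Fin k) Θ) [IsFiniteKernel M] {p : Fin k → ℝ}
    (hp : ∀ a, 0 ≤ p a) (S : Set Θ) :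
    ENNReal.ofReal (outputProb M p S) = ∫⁻ x, M x S ∂iidSamples n p := by
  rw [lintegral_iidSamples hp, outputProb,
    ENNReal.ofReal_sum_of_nonneg fun x _ => mul_nonneg (iidWeight_nonneg hp x) measureReal_nonneg]
  simp [ENNReal.ofReal_mul (iidWeight_nonneg hp _), ofReal_measureReal]

lemma one_le_outputProb_add (M : Kernel (Fin n → Fin k) Θ) [IsMarkovKernel M] {p : Fin k → ℝ}
    (hp : p ∈ stdSimplex ℝ (Fin k)) {S T : Set Θ} (hST : S ∪ T = Set.univ) :
    1 ≤ outputProb M p S + outputProb M p T := by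
  have hcover : ∀ x, 1 ≤ (M x).real S + (M x).real T := fun x => by
    simpa [hST] using measureReal_union_le (μ := M x) S T
  calc (1 : ℝ) = ∑ x, iidWeight p x * 1 := by simp [sum_iidWeight, hp.2]
    _ ≤ ∑ x, iidWeight p x * ((M x).real S + (M x).real T) :=
      sum_le_sum fun x _ => mul_le_mul_of_nonneg_left (hcover x) (iidWeight_nonneg hp.1 x)
    _ = outputProb M p S + outputProb M p T := by simp [outputProb, mul_add, sum_add_distrib]

lemma IsDP.outputProb_le_add {M : Kernel (Fin n → Fin k) Θ} [IsMarkovKernel M] {ε : ℝ}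
    (hε : 0 ≤ ε) (hM : IsDP M ε 0) {p q : Fin k → ℝ} (hp : p ∈ stdSimplex ℝ (Fin k))
    (hq : q ∈ stdSimplex ℝ (Fin k)) {S : Set Θ} (hS : MeasurableSet S) :
    outputProb M q S ≤ outputProb M p S + n * ε * tvVec p q :=
  sum_iidWeight_mul_le_of_update_le hp hq _ fun x i a => hM.measureReal_update_le hε hS x i a

end OutputProb

section Bhattacharyya

variable {ι : Type*} [Fintype ι]

lemma sq_sum_sqrt_mul_le_sum_min_mul {f g : ι → ℝ} (hf : ∀ i, 0 ≤ f i) (hg : ∀ i, 0 ≤ g i) :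
    (∑ i, √(f i * g i)) ^ 2 ≤ (∑ i, min (f i) (g i)) * ∑ i, (f i + g i) := by
  have hmin : ∀ i, 0 ≤ min (f i) (g i) := fun i => le_min (hf i) (hg i)
  have hmax : ∀ i, 0 ≤ max (f i) (g i) := fun i => (hf i).trans (le_max_left _ _)
  have hsplit : ∀ i, √(f i * g i) = √(min (f i) (g i)) * √(max (f i) (g i)) := fun i => by
    rw [← Real.sqrt_mul (hmin i), min_mul_max]
  calc (∑ i, √(f i * g i)) ^ 2
      ≤ (√(∑ i, min (f i) (g i)) * √(∑ i, max (f i) (g i))) ^ 2 := by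
        simp only [hsplit]
        exact pow_le_pow_left₀ (sum_nonneg fun i _ => by positivity)
          (Real.sum_sqrt_mul_sqrt_le _ hmin hmax) 2
    _ = (∑ i, min (f i) (g i)) * ∑ i, max (f i) (g i) := by
        rw [mul_pow, Real.sq_sqrt (sum_nonneg fun i _ => hmin i),
          Real.sq_sqrt (sum_nonneg fun i _ => hmax i)]
    _ ≤ (∑ i, min (f i) (g i)) * ∑ i, (f i + g i) :=
        mul_le_mul_of_nonneg_left (sum_le_sum fun i _ => max_le_add_of_nonneg (hf i) (hg i))
          (sum_nonneg fun i _ => hmin i)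

variable {n : ℕ}

lemma sum_sqrt_mul_pow_le_sum_min_iidWeight {p q : ι → ℝ} (hp : p ∈ stdSimplex ℝ ι)
    (hq : q ∈ stdSimplex ℝ ι) :
    ((∑ a, √(p a * q a)) ^ 2) ^ n ≤ 2 * ∑ x : Fin n → ι, min (iidWeight p x) (iidWeight q x) := by
  have h := sq_sum_sqrt_mul_le_sum_min_mul (iidWeight_nonneg (n := n) hp.1)
    (iidWeight_nonneg hq.1)
  rw [sum_add_distrib, sum_iidWeight, sum_iidWeight, hp.2, hq.2] at h
  simp only [sqrt_iidWeight_mul hp.1 hq.1, sum_iidWeight, one_pow] at h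
  rw [← pow_mul, mul_comm, pow_mul]
  linarith

end Bhattacharyya

section Risk

variable {k n : ℕ}

noncomputable def l2Risk (est : Kernel (Fin n → Fin k) (simplex k)) (p : Fin k → ℝ) : ℝ≥0∞ :=
  ∫⁻ x, ∫⁻ q, ENNReal.ofReal (l2Vec q.1 p) ∂(est x) ∂(iidSamples n p)

lemma l2Vec_eq_dist (p q : Fin k → ℝ) :
    l2Vec p q = dist (WithLp.toLp 2 p : EuclideanSpace ℝ (Fin k)) (WithLp.toLp 2 q) := by
  simp [EuclideanSpace.dist_eq, l2Vec, Real.dist_eq, sq_abs]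

lemma l2Vec_nonneg (p q : Fin k → ℝ) : 0 ≤ l2Vec p q := Real.sqrt_nonneg _

lemma measurable_l2Vec (p : Fin k → ℝ) : Measurable fun q : simplex k => l2Vec q.1 p := by
  have : Continuous fun v : Fin k → ℝ => l2Vec v p := by unfold l2Vec; fun_prop
  exact this.measurable.comp measurable_subtype_coe

lemma ofReal_l2Vec_le_lintegral_add (μ : Measure (simplex k)) [IsProbabilityMeasure μ]
    (p₁ p₂ : Fin k → ℝ) :
    ENNReal.ofReal (l2Vec p₁ p₂) ≤
      ∫⁻ q, ENNReal.ofReal (l2Vec q.1 p₁) ∂μ + ∫⁻ q, ENNReal.ofReal (l2Vec q.1 p₂) ∂μ := by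
  rw [← lintegral_add_left (measurable_l2Vec p₁).ennreal_ofReal]
  calc ENNReal.ofReal (l2Vec p₁ p₂) = ∫⁻ _, ENNReal.ofReal (l2Vec p₁ p₂) ∂μ := by simp
    _ ≤ _ := lintegral_mono fun q => by
      rw [← ENNReal.ofReal_add (l2Vec_nonneg _ _) (l2Vec_nonneg _ _)]
      refine ENNReal.ofReal_le_ofReal ?_
      simp only [l2Vec_eq_dist]
      exact dist_triangle_left _ _ _

theorem lecam_two_point (est : Kernel (Fin n → Fin k) (simplex k)) [IsMarkovKernel est]
    {p₁ p₂ : Fin k → ℝ} (hp₁ : ∀ a, 0 ≤ p₁ a) (hp₂ : ∀ a, 0 ≤ p₂ a) {α : ℝ} (hα : 0 ≤ α)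
    (h₁ : l2Risk est p₁ ≤ ENNReal.ofReal α) (h₂ : l2Risk est p₂ ≤ ENNReal.ofReal α) :
    l2Vec p₁ p₂ * ∑ x : Fin n → Fin k, min (iidWeight p₁ x) (iidWeight p₂ x) ≤ 2 * α := by
  set R := fun (p : Fin k → ℝ) x => ∫⁻ q, ENNReal.ofReal (l2Vec q.1 p) ∂(est x)
  have hmin : ∀ x : Fin n → Fin k, 0 ≤ min (iidWeight p₁ x) (iidWeight p₂ x) := fun x =>
    le_min (iidWeight_nonneg hp₁ x) (iidWeight_nonneg hp₂ x)
  rw [← ENNReal.ofReal_le_ofReal_iff (by positivity), ENNReal.ofReal_mul (l2Vec_nonneg _ _),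
    ENNReal.ofReal_sum_of_nonneg fun x _ => hmin x, mul_sum]
  calc ∑ x : Fin n → Fin k,
        ENNReal.ofReal (l2Vec p₁ p₂) * ENNReal.ofReal (min (iidWeight p₁ x) (iidWeight p₂ x))
      ≤ ∑ x : Fin n → Fin k,
          (ENNReal.ofReal (iidWeight p₁ x) * R p₁ x + ENNReal.ofReal (iidWeight p₂ x) * R p₂ x) :=
        sum_le_sum fun x _ => by
          grw [ofReal_l2Vec_le_lintegral_add (est x) p₁ p₂, add_mul, mul_comm, mul_comm (R p₂ x)]
          gcongr
          exacts [min_le_left _ _, min_le_right _ _]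
    _ = l2Risk est p₁ + l2Risk est p₂ := by
        rw [sum_add_distrib, l2Risk, l2Risk, lintegral_iidSamples hp₁, lintegral_iidSamples hp₂]
    _ ≤ ENNReal.ofReal (2 * α) := by
        rw [two_mul, ENNReal.ofReal_add hα hα]
        exact add_le_add h₁ h₂

end Risk

lemma sum_extend_embedding {ι κ : Type*} [Fintype ι] [Fintype κ] (e : ι ↪ κ)
    (g : ℝ → ℝ → ℝ) (hg : g 0 0 = 0) (v w : ι → ℝ) :
    ∑ b, g (Function.extend e v 0 b) (Function.extend e w 0 b) = ∑ i, g (v i) (w i) := by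
  classical
  calc ∑ b, g (Function.extend e v 0 b) (Function.extend e w 0 b)
      = ∑ b ∈ univ.map e, g (Function.extend e v 0 b) (Function.extend e w 0 b) := by
        refine (sum_subset (subset_univ _) fun b _ hb => ?_).symm
        have hb' : ¬∃ i, e i = b := by simpa using hb
        simp [Function.extend_apply' _ _ _ hb', hg]
    _ = ∑ i, g (v i) (w i) := by simp [e.injective.extend_apply]

section PairPerturbation

variable {K k : ℕ} (e : Fin K × Bool ↪ Fin k)

/-- Uniform on the `2K` points `e (j, s)`, except that within the `j`-th pair mass `β` is moved
onto `e (j, z j)`. -/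
noncomputable def pairPerturbation (β : ℝ) (z : Fin K → Bool) : Fin k → ℝ :=
  Function.extend e (fun js => 1 / (2 * K) + if js.2 = z js.1 then β else -β) 0

lemma pairPerturbation_apply (β : ℝ) (z : Fin K → Bool) (j : Fin K) (s : Bool) :
    pairPerturbation e β z (e (j, s)) = 1 / (2 * K) + if s = z j then β else -β :=
  e.injective.extend_apply _ _ _

lemma pairPerturbation_mem_stdSimplex (hK : 0 < K) {β : ℝ} (hβ : 0 ≤ β) (hβK : β ≤ 1 / (2 * K))
    (z : Fin K → Bool) : pairPerturbation e β z ∈ stdSimplex ℝ (Fin k) := by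
  constructor
  · intro a
    by_cases ha : ∃ js, e js = a
    · obtain ⟨⟨j, s⟩, rfl⟩ := ha
      rw [pairPerturbation_apply]
      split_ifs <;> linarith
    · simp [pairPerturbation, Function.extend_apply' _ _ _ ha]
  · have h := sum_extend_embedding e (fun x _ => x) rfl
      (fun js => 1 / (2 * K) + if js.2 = z js.1 then β else -β) 0
    simp only [pairPerturbation] at h ⊢
    rw [h, Fintype.sum_prod_type]
    have hpair : ∀ j, ∑ s : Bool, (1 / (2 * (K : ℝ)) + if s = z j then β else -β) = 1 / K := by
      intro j
      cases z j <;>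
        simp only [Fintype.sum_bool, if_true, Bool.true_eq_false, Bool.false_eq_true, if_false] <;>
        ring
    rw [sum_congr rfl fun j _ => hpair j, sum_const, card_univ, Fintype.card_fin, nsmul_eq_mul]
    field_simp

lemma tvVec_pairPerturbation_update_le {β : ℝ} (hβ : 0 ≤ β) (z : Fin K → Bool) (j : Fin K)
    (b : Bool) : tvVec (pairPerturbation e β z) (pairPerturbation e β (Function.update z j b)) ≤
      2 * β := by
  have h := sum_extend_embedding e (fun x y => |x - y|) (by simp)
    (fun js => 1 / (2 * K) + if js.2 = z js.1 then β else -β)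
    (fun js => 1 / (2 * K) + if js.2 = Function.update z j b js.1 then β else -β)
  have hterm : ∀ js : Fin K × Bool, |(1 / (2 * K) + if js.2 = z js.1 then β else -β) -
      (1 / (2 * K) + if js.2 = Function.update z j b js.1 then β else -β)| ≤
      if js.1 = j then 2 * β else 0 := by
    rintro ⟨j', s⟩
    by_cases hj : j' = j
    · subst hj
      rw [if_pos rfl, Function.update_self, add_sub_add_left_eq_sub, abs_le]
      constructor <;> split_ifs <;> linarith
    · simp [hj]
  rw [tvVec, pairPerturbation, pairPerturbation, h]
  calc (∑ js : Fin K × Bool, _) / 2 ≤ (∑ js : Fin K × Bool, if js.1 = j then 2 * β else 0) / 2 := by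
        gcongr with js; exact hterm js
    _ = 2 * β := by
      rw [Fintype.sum_prod_type]
      simp only [Fintype.sum_bool, sum_add_distrib, sum_ite_eq', mem_univ, if_true]
      ring

end PairPerturbation

section LeCam

variable {k n : ℕ} (e : Fin 1 × Bool ↪ Fin k)

lemma sq_l2Vec_pairPerturbation_one (β : ℝ) :
    l2Vec (pairPerturbation e β fun _ => true) (pairPerturbation e β fun _ => false) ^ 2 =
      8 * β ^ 2 := by
  rw [l2Vec, Real.sq_sqrt (sum_nonneg fun a _ => sq_nonneg _), pairPerturbation, pairPerturbation,
    sum_extend_embedding e (fun x y => (x - y) ^ 2) (by simp)]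
  rw [Fintype.sum_prod_type, Fin.sum_univ_one, Fintype.sum_bool]
  simp only [if_true, Bool.true_eq_false, Bool.false_eq_true, if_false]
  ring

lemma sq_sum_sqrt_mul_pairPerturbation_one {β : ℝ} (hβ : 0 ≤ β) (hβ' : β ≤ 1 / 2) :
    (∑ a, √(pairPerturbation e β (fun _ => true) a * pairPerturbation e β (fun _ => false) a)) ^ 2 =
      1 - 4 * β ^ 2 := by
  rw [pairPerturbation, pairPerturbation, sum_extend_embedding e (fun x y => √(x * y)) (by simp)]
  rw [Fintype.sum_prod_type, Fin.sum_univ_one, Fintype.sum_bool]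
  simp only [if_true, Bool.true_eq_false, Bool.false_eq_true, if_false]
  rw [mul_comm (_ + -β), ← two_mul, mul_pow, Real.sq_sqrt (by push_cast; nlinarith)]
  push_cast
  ring

theorem lecam_lower_bound (hk : 2 ≤ k) (est : Kernel (Fin n → Fin k) (simplex k))
    [IsMarkovKernel est] {α : ℝ} (hα : 0 ≤ α)
    (hacc : ∀ p : simplex k, l2Risk est p.1 ≤ ENNReal.ofReal α) : 1 ≤ 64 * α ^ 2 * (n + 1) := by
  obtain ⟨e⟩ := Function.Embedding.nonempty_of_card_le (α := Fin 1 × Bool) (β := Fin k)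
    (by simpa using hk)
  -- `β ^ 2 = 1 / (8 (n + 1))` keeps the Bhattacharyya coefficient `(1 - 4 β ^ 2) ^ n ≥ 1 / 2`
  set β := √(1 / (8 * (n + 1)))
  have hβ0 : 0 ≤ β := Real.sqrt_nonneg _
  have hβsq : β ^ 2 = 1 / (8 * (n + 1)) := Real.sq_sqrt (by positivity)
  have hβ : β ≤ 1 / 2 := by
    refine (pow_le_pow_iff_left₀ hβ0 (by norm_num) two_ne_zero).1 ?_
    rw [hβsq, div_le_iff₀ (by positivity)]
    nlinarith [(n.cast_nonneg : (0 : ℝ) ≤ n)]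
  have hP : ∀ b : Bool, pairPerturbation e β (fun _ => b) ∈ stdSimplex ℝ (Fin k) := fun b =>
    pairPerturbation_mem_stdSimplex e one_pos hβ0 (by simpa using hβ) _
  have hrisk := lecam_two_point est (hP true).1 (hP false).1 hα (hacc ⟨_, hP true⟩)
    (hacc ⟨_, hP false⟩)
  have hmin := sum_sqrt_mul_pow_le_sum_min_iidWeight (n := n) (hP true) (hP false)
  rw [sq_sum_sqrt_mul_pairPerturbation_one e hβ0 hβ] at hmin
  have hbern : 1 / 2 ≤ (1 - 4 * β ^ 2) ^ n := by
    refine le_trans ?_ (sub_eq_add_neg 1 (4 * β ^ 2) ▸ one_add_mul_le_pow (by nlinarith) n)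
    rw [hβsq]
    field_simp
    linarith
  have hl2 :=
    l2Vec_nonneg (pairPerturbation e β fun _ => true) (pairPerturbation e β fun _ => false)
  have hsq := pow_le_pow_left₀ hl2 (by nlinarith : _ ≤ 8 * α) 2
  rw [sq_l2Vec_pairPerturbation_one, hβsq] at hsq
  calc (1 : ℝ) = 8 * (1 / (8 * (n + 1))) * (n + 1) := by field_simp
    _ ≤ (8 * α) ^ 2 * (n + 1) := by gcongr
    _ = 64 * α ^ 2 * (n + 1) := by ring

end LeCam

section Assouad

variable {K k n : ℕ} (e : Fin K × Bool ↪ Fin k)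

def mistakeSet (z : Fin K → Bool) (j : Fin K) : Set (simplex k) :=
  {q | q.1 (e (j, z j)) ≤ q.1 (e (j, !z j))}

lemma measurable_simplex_apply (a : Fin k) : Measurable fun q : simplex k => q.1 a :=
  (measurable_pi_apply a).comp measurable_subtype_coe

lemma measurableSet_mistakeSet (z : Fin K → Bool) (j : Fin K) :
    MeasurableSet (mistakeSet e z j) :=
  measurableSet_le (measurable_simplex_apply _) (measurable_simplex_apply _)

lemma mistakeSet_union_update_not (z : Fin K → Bool) (j : Fin K) :
    mistakeSet e z j ∪ mistakeSet e (Function.update z j (!z j)) j = Set.univ := by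
  ext q
  simp [mistakeSet, le_total]

lemma two_mul_sq_le_of_le {x y c β : ℝ} (hβ : 0 ≤ β) (hxy : x ≤ y) :
    2 * β ^ 2 ≤ (x - (c + β)) ^ 2 + (y - (c + -β)) ^ 2 := by
  nlinarith [sq_nonneg (x - (c + β) + (y - (c + -β)))]

lemma two_mul_sq_mul_card_le {β : ℝ} (hβ : 0 ≤ β) {z : Fin K → Bool} {q : simplex k}
    {s : Finset (Fin K)} (hs : ∀ j ∈ s, q ∈ mistakeSet e z j) :
    2 * β ^ 2 * #s ≤ l2Vec q.1 (pairPerturbation e β z) ^ 2 := by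
  set d : Fin k → ℝ := fun a => (q.1 a - pairPerturbation e β z a) ^ 2
  have hpair : ∀ j ∈ s, 2 * β ^ 2 ≤ ∑ b : Bool, d (e (j, b)) := fun j hj => by
    have hsum : ∑ b : Bool, d (e (j, b)) = d (e (j, z j)) + d (e (j, !z j)) := by
      cases z j <;> simp [add_comm]
    rw [hsum]
    simpa [d, pairPerturbation_apply] using two_mul_sq_le_of_le hβ (hs j hj)
  calc 2 * β ^ 2 * #s = ∑ j ∈ s, 2 * β ^ 2 := by rw [sum_const, nsmul_eq_mul, mul_comm]
    _ ≤ ∑ j ∈ s, ∑ b : Bool, d (e (j, b)) := sum_le_sum hpair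
    _ ≤ ∑ j, ∑ b : Bool, d (e (j, b)) :=
        sum_le_univ_sum_of_nonneg fun j => sum_nonneg fun b _ => sq_nonneg _
    _ = ∑ a ∈ univ.map e, d a := by rw [sum_map, Fintype.sum_prod_type]
    _ ≤ ∑ a, d a := sum_le_univ_sum_of_nonneg fun a => sq_nonneg _
    _ = l2Vec q.1 (pairPerturbation e β z) ^ 2 :=
        (Real.sq_sqrt (sum_nonneg fun a _ => sq_nonneg _)).symm

lemma sqrt_two_mul_card_le {β : ℝ} (hβ : 0 ≤ β) {z : Fin K → Bool} {q : simplex k}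
    {s : Finset (Fin K)} (hs : ∀ j ∈ s, q ∈ mistakeSet e z j) :
    √2 * β * #s ≤ √K * l2Vec q.1 (pairPerturbation e β z) := by
  have hsK : (#s : ℝ) ≤ K := by exact_mod_cast (card_le_univ s).trans_eq (Fintype.card_fin K)
  refine (pow_le_pow_iff_left₀ (by positivity)
    (mul_nonneg (Real.sqrt_nonneg _) (l2Vec_nonneg _ _)) two_ne_zero).1 ?_
  rw [mul_pow, mul_pow, mul_pow, Real.sq_sqrt zero_le_two, Real.sq_sqrt K.cast_nonneg]
  calc 2 * β ^ 2 * (#s : ℝ) ^ 2 = 2 * β ^ 2 * #s * #s := by ring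
    _ ≤ l2Vec q.1 (pairPerturbation e β z) ^ 2 * K := by
        gcongr
        exact two_mul_sq_mul_card_le e hβ hs
    _ = K * l2Vec q.1 (pairPerturbation e β z) ^ 2 := mul_comm _ _

lemma mul_sum_measure_mistakeSet_le {β : ℝ} (hβ : 0 ≤ β) (z : Fin K → Bool)
    (μ : Measure (simplex k)) :
    ENNReal.ofReal (√2 * β) * ∑ j, μ (mistakeSet e z j) ≤
      ENNReal.ofReal √K * ∫⁻ q, ENNReal.ofReal (l2Vec q.1 (pairPerturbation e β z)) ∂μ := by
  classical
  simp only [← lintegral_indicator_one (measurableSet_mistakeSet e z _)]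
  rw [← lintegral_finsetSum _ fun j _ => measurable_one.indicator (measurableSet_mistakeSet e z j),
    ← lintegral_const_mul' _ _ ENNReal.ofReal_ne_top,
    ← lintegral_const_mul' _ _ ENNReal.ofReal_ne_top]
  refine lintegral_mono fun q => ?_
  have hcount : ∑ j, (mistakeSet e z j).indicator 1 q =
      ((univ.filter fun j => q ∈ mistakeSet e z j).card : ℝ≥0∞) := by
    simp [Set.indicator_apply, sum_boole]
  rw [hcount, ← ENNReal.ofReal_natCast, ← ENNReal.ofReal_mul (by positivity),
    ← ENNReal.ofReal_mul (Real.sqrt_nonneg _)]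
  exact ENNReal.ofReal_le_ofReal (sqrt_two_mul_card_le e hβ fun j hj => (mem_filter.1 hj).2)

lemma sum_outputProb_mistakeSet_le (est : Kernel (Fin n → Fin k) (simplex k))
    [IsMarkovKernel est] {β : ℝ} (hβ : 0 ≤ β) {z : Fin K → Bool}
    (hP : ∀ a, 0 ≤ pairPerturbation e β z a) {α : ℝ} (hα : 0 ≤ α)
    (hrisk : l2Risk est (pairPerturbation e β z) ≤ ENNReal.ofReal α) :
    √2 * β * ∑ j, outputProb est (pairPerturbation e β z) (mistakeSet e z j) ≤ √K * α := by
  rw [← ENNReal.ofReal_le_ofReal_iff (by positivity), ENNReal.ofReal_mul (by positivity),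
    ENNReal.ofReal_sum_of_nonneg fun j _ => outputProb_nonneg est hP _]
  simp only [ofReal_outputProb est hP]
  rw [← lintegral_finsetSum _ fun j _ => est.measurable_coe (measurableSet_mistakeSet e z j),
    ← lintegral_const_mul' _ _ ENNReal.ofReal_ne_top]
  calc ∫⁻ x, ENNReal.ofReal (√2 * β) * ∑ j, est x (mistakeSet e z j) ∂iidSamples n _
      ≤ ∫⁻ x, ENNReal.ofReal √K *
          ∫⁻ q, ENNReal.ofReal (l2Vec q.1 (pairPerturbation e β z)) ∂est x ∂iidSamples n _ :=
        lintegral_mono fun x => mul_sum_measure_mistakeSet_le e hβ z (est x)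
    _ = ENNReal.ofReal √K * l2Risk est (pairPerturbation e β z) :=
        lintegral_const_mul' _ _ ENNReal.ofReal_ne_top
    _ ≤ ENNReal.ofReal (√K * α) := by
        rw [ENNReal.ofReal_mul (Real.sqrt_nonneg _)]
        gcongr

theorem assouad_lower_bound (hK : 0 < K) (h2K : 2 * K ≤ k)
    (est : Kernel (Fin n → Fin k) (simplex k)) [IsMarkovKernel est] {ε : ℝ} (hε : 0 ≤ ε)
    (hDP : IsDP est ε 0) {β : ℝ} (hβ : 0 ≤ β) (hβK : β ≤ 1 / (2 * K)) {α : ℝ} (hα : 0 ≤ α)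
    (hacc : ∀ p : simplex k, l2Risk est p.1 ≤ ENNReal.ofReal α) :
    √2 * β * K * (1 - 2 * n * ε * β) ≤ 2 * √K * α := by
  obtain ⟨e⟩ := Function.Embedding.nonempty_of_card_le (α := Fin K × Bool) (β := Fin k)
    (by simpa [mul_comm] using h2K)
  set P := pairPerturbation e β
  have hP : ∀ z, P z ∈ stdSimplex ℝ (Fin k) := pairPerturbation_mem_stdSimplex e hK hβ hβK
  set E : (Fin K → Bool) → Fin K → ℝ := fun z j => outputProb est (P z) (mistakeSet e z j)
  -- the mistake sets of `z` and of `z` with `z j` flipped cover everything, while the two data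
  -- distributions are `2β`-close in total variation
  have hflip : ∀ z j, 1 - 2 * n * ε * β ≤ E z j + E (Function.update z j (!z j)) j := by
    intro z j
    have hcover := one_le_outputProb_add est (hP (Function.update z j (!z j)))
      (mistakeSet_union_update_not e z j)
    have htransfer := hDP.outputProb_le_add hε (hP z) (hP (Function.update z j (!z j)))
      (measurableSet_mistakeSet e z j)
    have htv := tvVec_pairPerturbation_update_le e hβ z j (!z j)
    have hnε : 0 ≤ n * ε := by positivity
    nlinarith
  have hrisk : ∀ z, √2 * β * ∑ j, E z j ≤ √K * α := fun z =>
    sum_outputProb_mistakeSet_le e est hβ (hP z).1 hα (hacc ⟨_, hP z⟩)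
  have hcube : ∑ z, ∑ j, E (Function.update z j (!z j)) j = ∑ z, ∑ j, E z j := by
    rw [sum_comm, sum_comm (f := fun z j => E z j)]
    refine sum_congr rfl fun j _ => ?_
    have hinv : Function.Involutive fun z : Fin K → Bool => Function.update z j (!z j) := by
      intro z; simp
    exact Equiv.sum_comp (hinv.toPerm _) fun z => E z j
  have hsum := sum_le_sum fun z (_ : z ∈ univ) => sum_le_sum fun j (_ : j ∈ univ) => hflip z j
  have hsum' := sum_le_sum fun z (_ : z ∈ univ) => hrisk z
  simp only [sum_add_distrib, hcube, sum_const, card_univ, Fintype.card_fin, nsmul_eq_mul,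
    ← mul_sum] at hsum hsum'
  have hN : (0 : ℝ) < Fintype.card (Fin K → Bool) := by exact_mod_cast Fintype.card_pos
  refine le_of_mul_le_mul_left ?_ hN
  nlinarith [mul_le_mul_of_nonneg_left hsum (by positivity : 0 ≤ √2 * β)]

end Assouad

lemma exists_pair_count {k : ℕ} (hk : 2 ≤ k) {α : ℝ} (hα : 0 < α) (hαk : α < 1 / √k)
    (hα48 : α < 1 / 48) : ∃ K : ℕ, 0 < K ∧ 2 * K ≤ k ∧ k ≤ 512 * K ∧ 16 * α * √K ≤ 1 := by
  refine ⟨k / 512 + 1, by omega, by omega, by omega, ?_⟩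
  have hKk : 512 * ((k / 512 + 1 : ℕ) : ℝ) ≤ k + 512 := by exact_mod_cast (by omega)
  have hαk2 : α ^ 2 * k < 1 := by
    rw [lt_div_iff₀ (Real.sqrt_pos.2 (by positivity))] at hαk
    simpa [mul_pow] using pow_lt_one₀ (by positivity) hαk two_ne_zero
  refine (pow_le_one_iff_of_nonneg (by positivity) two_ne_zero).1 ?_
  rw [mul_pow, Real.sq_sqrt (Nat.cast_nonneg _)]
  nlinarith

theorem privacy_lower_bound {k n : ℕ} (hk : 2 ≤ k) (est : Kernel (Fin n → Fin k) (simplex k))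
    [IsMarkovKernel est] {ε : ℝ} (hε : 0 ≤ ε) (hDP : IsDP est ε 0) {α : ℝ} (hα : 0 < α)
    (hαk : α < 1 / √k) (hα48 : α < 1 / 48)
    (hacc : ∀ p : simplex k, l2Risk est p.1 ≤ ENNReal.ofReal α) :
    √k ≤ 1024 * n * ε * α := by
  obtain ⟨K, hK, h2K, hkK, hαK⟩ := exists_pair_count hk hα hαk hα48
  have hs : 0 < √(K : ℝ) := Real.sqrt_pos.2 (by exact_mod_cast hK)
  have hs2 : √(K : ℝ) ^ 2 = K := Real.sq_sqrt K.cast_nonneg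
  set β := 8 * α / √K
  have hβs : β * √K = 8 * α := div_mul_cancel₀ _ hs.ne'
  have hβK : β ≤ 1 / (2 * K) := by
    rw [div_le_div_iff₀ hs (by positivity)]
    calc 8 * α * (2 * K) = 16 * α * √K * √K := by linear_combination (-16 * α) * hs2
      _ ≤ 1 * √K := by gcongr
  have h := assouad_lower_bound hK h2K est hε hDP (by positivity) hβK hα.le hacc
  set X := 1 - 2 * n * ε * β
  have h' : √2 * 8 * X * (√K * α) ≤ 2 * (√K * α) := by
    have hK : √2 * β * K * X = √2 * 8 * X * (√K * α) := by
      linear_combination (√2 * X * √K) * hβs - (√2 * X * β) * hs2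
    linarith
  have hX : X ≤ 1 / 4 := by
    have h8 := le_of_mul_le_mul_right h' (mul_pos hs hα)
    rcases le_or_gt X 0 with hX | hX
    · linarith
    · nlinarith [Real.one_lt_sqrt_two]
  have hKn : 3 * √K ≤ 64 * n * ε * α := by
    calc 3 * √K ≤ 4 * (2 * n * ε * β) * √K := by gcongr; linarith
      _ = 64 * n * ε * α := by linear_combination (8 * n * ε) * hβs
  have hkK' : (k : ℝ) ≤ 512 * K := by exact_mod_cast hkK
  calc √(k : ℝ) ≤ √((32 * √K) ^ 2) := Real.sqrt_le_sqrt (by rw [mul_pow, hs2]; linarith)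
    _ = 32 * √K := Real.sqrt_sq (by positivity)
    _ ≤ 1024 * n * ε * α := by linarith

/-- Sample complexity lower bound for `ε`-DP `k`-ary distribution estimation under `ℓ₂`
distance, small-error regime `α < min(1/√k, 1/48)`: any `ε`-DP estimator achieving expected
`ℓ₂` error at most `α` on every `p ∈ Δ_k` requires `n ≥ c (1/α² + √k/(αε))` samples. -/
theorem kary_l2_pure_dp_lower_bound_small_error :
    ∃ c : ℝ, 0 < c ∧
      ∀ (k : ℕ), 40 ≤ k → ∀ α : ℝ, 0 < α → α < min (1 / Real.sqrt k) (1 / 48) →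
        ∀ ε : ℝ, 0 < ε → ∀ n : ℕ,
        ∀ est : Kernel (Fin n → Fin k) (simplex k), IsMarkovKernel est → IsDP est ε 0 →
          (∀ p : simplex k,
            ∫⁻ x, ∫⁻ q, ENNReal.ofReal (l2Vec q.1 p.1) ∂(est x) ∂(iidSamples n p.1)
              ≤ ENNReal.ofReal α) →
          c * (1 / α ^ 2 + Real.sqrt k / (α * ε)) ≤ n := by
  refine ⟨1 / 2048, by norm_num, fun k hk α hα hαlt ε hε n est hest hDP hacc => ?_⟩
  have hα48 : α < 1 / 48 := hαlt.trans_le (min_le_right _ _)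
  have hstat := lecam_lower_bound (by omega) est hα.le hacc
  have hpriv := privacy_lower_bound (by omega) est hε.le hDP hα
    (hαlt.trans_le (min_le_left _ _)) hα48 hacc
  have h1 : 1 / α ^ 2 ≤ 128 * n := by
    rw [div_le_iff₀ (by positivity)]
    nlinarith
  have h2 : √k / (α * ε) ≤ 1024 * n := by
    rw [div_le_iff₀ (by positivity)]
    linarith
  linarith
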